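/- The set of linear operators on grid functions realizable by ACUs equals the set realizable by (finitely supported) convolutions: an operator T is of the form T x(m,n) = Σ_k w_k · x̂(m+α_k, n+β_k) for some finite synapse set if and only if it is of the form T x(m,n) = Σ_{(i,j)} w̄(i,j)·x(m+i,n+j) for some finitely supported kernel w̄. -/

import Mathlib

/-! Bilinear interpolation at a point `(m + α, n + β)` is a convolution with a kernel supported on
the four lattice neighbours `{⌊α⌋, ⌊α⌋ + 1} × {⌊β⌋, ⌊β⌋ + 1}`, whose weights are products of the
one-dimensional linear-interpolation weights; a finite weighted sum of such kernels is again a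
finitely supported kernel. Conversely, a synapse at an integer displacement reads off the grid value
exactly, so every convolution is an ACU. -/

noncomputable def interp (x : ℤ × ℤ → ℝ) (m n : ℤ) (α β : ℝ) : ℝ :=
  x (m + ⌊α⌋, n + ⌊β⌋) * (1 - Int.fract α) * (1 - Int.fract β) +
  x (m + ⌊α⌋ + 1, n + ⌊β⌋) * Int.fract α * (1 - Int.fract β) +
  x (m + ⌊α⌋, n + ⌊β⌋ + 1) * (1 - Int.fract α) * Int.fract β +
  x (m + ⌊α⌋ + 1, n + ⌊β⌋ + 1) * Int.fract α * Int.fract β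

open Finset

noncomputable def linInterpWeight (a : ℝ) (i : ℤ) : ℝ :=
  if i = ⌊a⌋ then 1 - Int.fract a else if i = ⌊a⌋ + 1 then Int.fract a else 0

lemma linInterpWeight_eq_zero {a : ℝ} {i : ℤ} (hi : i ∉ ({⌊a⌋, ⌊a⌋ + 1} : Finset ℤ)) :
    linInterpWeight a i = 0 := by
  simp only [mem_insert, mem_singleton, not_or] at hi
  simp [linInterpWeight, hi.1, hi.2]

lemma sum_linInterpWeight_mul (a : ℝ) (f : ℤ → ℝ) :
    ∑ i ∈ ({⌊a⌋, ⌊a⌋ + 1} : Finset ℤ), linInterpWeight a i * f i =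
      (1 - Int.fract a) * f ⌊a⌋ + Int.fract a * f (⌊a⌋ + 1) := by
  rw [sum_pair (by omega)]
  simp [linInterpWeight]

lemma interp_eq_sum (x : ℤ × ℤ → ℝ) (m n : ℤ) (α β : ℝ) :
    interp x m n α β =
      ∑ p ∈ ({⌊α⌋, ⌊α⌋ + 1} : Finset ℤ) ×ˢ ({⌊β⌋, ⌊β⌋ + 1} : Finset ℤ),
        linInterpWeight α p.1 * linInterpWeight β p.2 * x (m + p.1, n + p.2) := by
  simp only [sum_product, mul_assoc, ← mul_sum]
  rw [sum_linInterpWeight_mul, sum_linInterpWeight_mul, sum_linInterpWeight_mul, interp]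
  simp only [add_assoc]
  ring

lemma interp_intCast (x : ℤ × ℤ → ℝ) (m n i j : ℤ) :
    interp x m n i j = x (m + i, n + j) := by
  simp [interp]

lemma sum_mul_sum_eq_sum_biUnion {ι κ R : Type*} [Fintype ι] [DecidableEq κ] [CommSemiring R]
    (w : ι → R) (S : ι → Finset κ) (c : ι → κ → R) (hc : ∀ i, ∀ p ∉ S i, c i p = 0)
    (f : κ → R) :
    ∑ i, w i * ∑ p ∈ S i, c i p * f p = ∑ p ∈ univ.biUnion S, (∑ i, w i * c i p) * f p := by
  have hS : ∀ i, ∑ p ∈ S i, c i p * f p = ∑ p ∈ univ.biUnion S, c i p * f p := fun i =>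
    sum_subset (subset_biUnion_of_mem S (mem_univ i)) fun p _ hp => by rw [hc i p hp, zero_mul]
  simp_rw [hS, mul_sum, sum_mul, mul_assoc]
  exact sum_comm

theorem acu_operators_eq_conv_operators (T : (ℤ × ℤ → ℝ) → (ℤ × ℤ → ℝ)) :
    (∃ (K : ℕ) (w : Fin K → ℝ) (α β : Fin K → ℝ),
      ∀ (x : ℤ × ℤ → ℝ) (m n : ℤ),
        T x (m, n) = ∑ k, w k * interp x m n (α k) (β k)) ↔
    (∃ (S : Finset (ℤ × ℤ)) (wbar : ℤ × ℤ → ℝ),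
      (∀ p ∉ S, wbar p = 0) ∧
      ∀ (x : ℤ × ℤ → ℝ) (m n : ℤ),
        T x (m, n) = ∑ p ∈ S, wbar p * x (m + p.1, n + p.2)) := by
  constructor
  · rintro ⟨K, w, α, β, hT⟩
    let stencil (k : Fin K) : Finset (ℤ × ℤ) :=
      ({⌊α k⌋, ⌊α k⌋ + 1} : Finset ℤ) ×ˢ ({⌊β k⌋, ⌊β k⌋ + 1} : Finset ℤ)
    let c (k : Fin K) (p : ℤ × ℤ) : ℝ := linInterpWeight (α k) p.1 * linInterpWeight (β k) p.2
    have hc : ∀ k, ∀ p ∉ stencil k, c k p = 0 := fun k p hp => by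
      rcases not_and_or.mp (mem_product.not.mp hp) with h | h
      · simp [c, linInterpWeight_eq_zero h]
      · simp [c, linInterpWeight_eq_zero h]
    refine ⟨univ.biUnion stencil, fun p => ∑ k, w k * c k p, fun p hp => ?_, fun x m n => ?_⟩
    · simp only [mem_biUnion, mem_univ, true_and, not_exists] at hp
      exact sum_eq_zero fun k _ => by rw [hc k p (hp k), mul_zero]
    · simp_rw [hT, interp_eq_sum]
      exact sum_mul_sum_eq_sum_biUnion w stencil c hc _
  · rintro ⟨S, wbar, -, hT⟩
    let e := S.equivFin.symm
    refine ⟨S.card, fun k => wbar (e k), fun k => ((e k : ℤ × ℤ).1 : ℝ),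
      fun k => ((e k : ℤ × ℤ).2 : ℝ), fun x m n => ?_⟩
    simp_rw [hT, interp_intCast]
    rw [← S.sum_coe_sort]
    exact (Equiv.sum_comp e fun p : S => wbar p * x (m + (p : ℤ × ℤ).1, n + (p : ℤ × ℤ).2)).symm
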